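/- Let H be a finite-dimensional Hopf algebra over a field k with bijective antipode S. Let t ∈ H be a nonzero left integral, let Λ : H → k be a linear functional with Λ(t₁)·t₂ = 1, and let g ∈ H be a grouplike element satisfying x₁·Λ(x₂) = Λ(x)·g for all x ∈ H. Then Δ(t) = S²(t₂)·g ⊗ t₁, i.e. the equality t₁ ⊗ t₂ = S²(t₂)·g ⊗ t₁ holds in H ⊗ H. -/

import Mathlib

/-!
Since `t` is a left integral, `t₁ ⊗ h t₂ = S(h) t₁ ⊗ t₂` for every `h`. Slicing this with `Λ`
in either leg, and using `Λ(t₁) t₂ = 1` (hence `Λ(t) = 1`, by applying `ε`), gives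
`Λ(S(y) t₁) t₂ = y` and `Λ(h t₂) t₁ = S(h) g`. The first identity makes `y ↦ Λ(S(y) ·)`
injective, so by counting dimensions every functional on `H` has this form. Two tensors agree as
soon as all their slices `(id ⊗ μ)` do, and slicing both sides of the claim with `Λ(S(y) ·)`
gives `S²(y) g`.
-/

open TensorProduct

variable {k H : Type*} [Field k] [Ring H] [HopfAlgebra k H]

/-- `swl f h = f(h₁) • h₂` in Sweedler notation. -/
noncomputable def swl (f : H →ₗ[k] k) : H →ₗ[k] H :=
  (TensorProduct.lid k H).toLinearMap ∘ₗ (f.rTensor H) ∘ₗ Coalgebra.comul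

/-- `swr f h = f(h₂) • h₁` in Sweedler notation. -/
noncomputable def swr (f : H →ₗ[k] k) : H →ₗ[k] H :=
  (TensorProduct.rid k H).toLinearMap ∘ₗ (f.lTensor H) ∘ₗ Coalgebra.comul

/-- `sw2 f g h = f(h₁) * g(h₂)`, an element of `H`, in Sweedler notation. -/
noncomputable def sw2 (f g : H →ₗ[k] H) : H →ₗ[k] H :=
  (LinearMap.mul' k H) ∘ₗ (TensorProduct.map f g) ∘ₗ Coalgebra.comul

/-- `sw2k f g h = f(h₁) * g(h₂)`, a scalar, in Sweedler notation. -/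
noncomputable def sw2k (f g : H →ₗ[k] k) : H →ₗ[k] k :=
  (LinearMap.mul' k k) ∘ₗ (TensorProduct.map f g) ∘ₗ Coalgebra.comul

/-- `comul3 h = (h₁ ⊗ h₂) ⊗ h₃`, the iterated comultiplication `(Δ ⊗ id)Δ`. -/
noncomputable def comul3 : H →ₗ[k] (H ⊗[k] H) ⊗[k] H :=
  (LinearMap.rTensor H Coalgebra.comul) ∘ₗ Coalgebra.comul

/-- `sw3 f g e h = f(h₁) * g(h₂) * e(h₃)`, an element of `H`, in Sweedler notation. -/
noncomputable def sw3 (f g e : H →ₗ[k] H) : H →ₗ[k] H :=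
  (LinearMap.mul' k H) ∘ₗ
    (TensorProduct.map ((LinearMap.mul' k H) ∘ₗ TensorProduct.map f g) e) ∘ₗ comul3

section Slice

variable {R V W V' : Type*} [CommSemiring R] [AddCommMonoid V] [Module R V]
  [AddCommMonoid W] [Module R W] [AddCommMonoid V'] [Module R V']

noncomputable def sliceLeft (μ : Module.Dual R V) : V ⊗[R] W →ₗ[R] W :=
  TensorProduct.lid R W ∘ₗ μ.rTensor W

noncomputable def sliceRight (ν : Module.Dual R W) : V ⊗[R] W →ₗ[R] V :=
  TensorProduct.rid R V ∘ₗ ν.lTensor V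

@[simp]
lemma sliceLeft_tmul (μ : Module.Dual R V) (v : V) (w : W) :
    sliceLeft μ (v ⊗ₜ[R] w) = μ v • w := by
  simp [sliceLeft]

@[simp]
lemma sliceRight_tmul (ν : Module.Dual R W) (v : V) (w : W) :
    sliceRight ν (v ⊗ₜ[R] w) = ν w • v := by
  simp [sliceRight]

lemma apply_sliceLeft (μ : Module.Dual R V) (ν : Module.Dual R W) (z : V ⊗[R] W) :
    ν (sliceLeft μ z) = μ (sliceRight ν z) := by
  induction z with
  | zero => simp
  | tmul v w => simp [mul_comm]
  | add z z' hz hz' => simp [hz, hz']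

lemma sliceRight_comm (μ : Module.Dual R V) (z : V ⊗[R] W) :
    sliceRight μ (TensorProduct.comm R V W z) = sliceLeft μ z := by
  induction z with
  | zero => simp
  | tmul v w => simp
  | add z z' hz hz' => simp [hz, hz']

lemma sliceRight_map_id (f : V →ₗ[R] V') (ν : Module.Dual R W) (z : V ⊗[R] W) :
    sliceRight ν (TensorProduct.map f LinearMap.id z) = f (sliceRight ν z) := by
  induction z with
  | zero => simp
  | tmul v w => simp
  | add z z' hz hz' => simp [hz, hz']

lemma TensorProduct.ext_sliceRight [Module.Free R W] {z z' : V ⊗[R] W}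
    (h : ∀ ν : Module.Dual R W, sliceRight ν z = sliceRight ν z') : z = z' := by
  classical
  let b := Module.Free.chooseBasis R W
  apply (TensorProduct.equivFinsuppOfBasisRight b).injective
  ext i
  rw [TensorProduct.equivFinsuppOfBasisRight_apply, TensorProduct.equivFinsuppOfBasisRight_apply]
  exact h (b.coord i)

end Slice

section SliceMul

variable {R A B : Type*} [CommSemiring R] [Semiring A] [Algebra R A] [Semiring B] [Algebra R B]

lemma sliceLeft_one_tmul_mul (μ : Module.Dual R A) (b : B) (z : A ⊗[R] B) :
    sliceLeft μ ((1 ⊗ₜ b) * z) = b * sliceLeft μ z := by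
  induction z with
  | zero => simp
  | tmul a b' => simp
  | add z z' hz hz' => simp [mul_add, hz, hz']

lemma sliceLeft_tmul_one_mul (μ : Module.Dual R A) (a : A) (z : A ⊗[R] B) :
    sliceLeft μ ((a ⊗ₜ 1) * z) = sliceLeft (μ ∘ₗ LinearMap.mulLeft R a) z := by
  induction z with
  | zero => simp
  | tmul a' b => simp
  | add z z' hz hz' => simp [mul_add, hz, hz']

lemma sliceRight_one_tmul_mul (ν : Module.Dual R B) (b : B) (z : A ⊗[R] B) :
    sliceRight ν ((1 ⊗ₜ b) * z) = sliceRight (ν ∘ₗ LinearMap.mulLeft R b) z := by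
  induction z with
  | zero => simp
  | tmul a b' => simp
  | add z z' hz hz' => simp [mul_add, hz, hz']

lemma sliceRight_tmul_one_mul (ν : Module.Dual R B) (a : A) (z : A ⊗[R] B) :
    sliceRight ν ((a ⊗ₜ 1) * z) = a * sliceRight ν z := by
  induction z with
  | zero => simp
  | tmul a' b => simp
  | add z z' hz hz' => simp [mul_add, hz, hz']

end SliceMul

section Hopf

variable {R A : Type*} [CommSemiring R] [Semiring A] [HopfAlgebra R A]

open Coalgebra HopfAlgebra

variable (R) in
def IsLeftIntegral (t : A) : Prop :=
  ∀ h : A, h * t = counit (R := R) h • t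

lemma counit_sliceLeft_comul (μ : Module.Dual R A) (a : A) :
    counit (R := R) (sliceLeft μ (comul a)) = μ a := by
  rw [apply_sliceLeft]
  simp [sliceRight]

lemma rTensor_mul_antipode_assoc_symm_tmul (x : A) (w : A ⊗[R] A) :
    (LinearMap.mul' R A ∘ₗ (antipode R).rTensor A).rTensor A
      ((TensorProduct.assoc R A A A).symm (x ⊗ₜ w)) = (antipode R x ⊗ₜ 1) * w := by
  induction w with
  | zero => simp
  | tmul y z => simp
  | add w w' hw hw' => rw [tmul_add, map_add, map_add, hw, hw', mul_add]

lemma sum_antipode_tmul_one_mul_comul {a : A} {ι : Type*} (r : Repr R a ι) :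
    ∑ i ∈ r.index, (antipode R (r.left i) ⊗ₜ[R] (1 : A)) * comul (r.right i) = 1 ⊗ₜ a := by
  let Φ := (LinearMap.mul' R A ∘ₗ (antipode R).rTensor A).rTensor A
  calc ∑ i ∈ r.index, (antipode R (r.left i) ⊗ₜ[R] (1 : A)) * comul (r.right i)
      = Φ ((TensorProduct.assoc R A A A).symm (comul.lTensor A (comul a))) := by
        simp [← r.eq, map_sum, Φ, rTensor_mul_antipode_assoc_symm_tmul]
    _ = Φ (comul.rTensor A (comul a)) := by rw [coassoc_symm_apply]
    _ = 1 ⊗ₜ a := by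
        rw [← LinearMap.rTensor_comp_apply, LinearMap.comp_assoc, mul_antipode_rTensor_comul,
          LinearMap.rTensor_comp_apply, rTensor_counit_comul]
        simp

lemma sum_counit_right_smul {a : A} {ι : Type*} (r : Repr R a ι) :
    ∑ i ∈ r.index, counit (R := R) (r.right i) • r.left i = a := by
  simpa only [map_sum, TensorProduct.rid_tmul, one_smul]
    using congr(TensorProduct.rid R A $(sum_tmul_counit_eq r))

variable {t : A}

lemma IsLeftIntegral.one_tmul_mul_comul (ht : IsLeftIntegral R t) (h : A) :
    (1 ⊗ₜ h) * comul (R := R) t = (antipode R h ⊗ₜ 1) * comul t := by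
  let r := ℛ R h
  calc (1 ⊗ₜ h) * comul (R := R) t
      = ∑ i ∈ r.index, (antipode R (r.left i) ⊗ₜ 1) * comul (r.right i * t) := by
        simp [← sum_antipode_tmul_one_mul_comul r, Finset.sum_mul, Bialgebra.comul_mul, mul_assoc]
    _ = (∑ i ∈ r.index, counit (R := R) (r.right i) • antipode R (r.left i)) ⊗ₜ 1 * comul t := by
        simp [ht _, sum_tmul, Finset.sum_mul, ← smul_tmul']
    _ = (antipode R h ⊗ₜ 1) * comul t := by
        simp only [← map_smul, ← map_sum, sum_counit_right_smul]

variable {Λ : Module.Dual R A}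

lemma IsLeftIntegral.sliceLeft_mulLeft_antipode (ht : IsLeftIntegral R t)
    (hΛ : sliceLeft Λ (comul (R := R) t) = 1) (y : A) :
    sliceLeft (Λ ∘ₗ LinearMap.mulLeft R (antipode R y)) (comul (R := R) t) = y := by
  rw [← sliceLeft_tmul_one_mul, ← ht.one_tmul_mul_comul, sliceLeft_one_tmul_mul, hΛ, mul_one]

lemma IsLeftIntegral.sliceRight_mulLeft (ht : IsLeftIntegral R t) (h : A) :
    sliceRight (Λ ∘ₗ LinearMap.mulLeft R h) (comul (R := R) t) =
      antipode R h * sliceRight Λ (comul (R := R) t) := by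
  rw [← sliceRight_one_tmul_mul, ht.one_tmul_mul_comul, sliceRight_tmul_one_mul]

end Hopf

lemma IsLeftIntegral.surjective_mulLeft_antipode {K A : Type*} [Field K] [Ring A]
    [HopfAlgebra K A] [FiniteDimensional K A] {t : A} (ht : IsLeftIntegral K t)
    {Λ : Module.Dual K A} (hΛ : sliceLeft Λ (Coalgebra.comul (R := K) t) = 1) :
    Function.Surjective fun y : A => Λ ∘ₗ LinearMap.mulLeft K (HopfAlgebra.antipode K y) := by
  let θ : A →ₗ[K] Module.Dual K A :=
    LinearMap.llcomp K A A K Λ ∘ₗ LinearMap.mul K A ∘ₗ HopfAlgebra.antipode K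
  have hθ : Function.Injective θ :=
    Function.LeftInverse.injective (g := fun μ => sliceLeft μ (Coalgebra.comul (R := K) t))
      (ht.sliceLeft_mulLeft_antipode hΛ)
  exact (LinearMap.injective_iff_surjective_of_finrank_eq_finrank
    Subspace.dual_finrank_eq.symm).mp hθ

theorem statement2_general [FiniteDimensional k H]
    (t : H)
    (htl : ∀ h : H, h * t = Coalgebra.counit (R := k) h • t)
    (Λ : H →ₗ[k] k) (hΛ : swl Λ t = 1)
    (g : H)
    (hgΛ : ∀ x : H, swr Λ x = Λ x • g) :
    Coalgebra.comul (R := k) t =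
      (TensorProduct.map
        ((LinearMap.mulRight k g) ∘ₗ (HopfAlgebra.antipode (R := k)) ∘ₗ
          (HopfAlgebra.antipode (R := k)))
        LinearMap.id)
      ((TensorProduct.comm k H H) (Coalgebra.comul (R := k) t)) := by
  have ht : IsLeftIntegral k t := htl
  change sliceLeft Λ (Coalgebra.comul t) = 1 at hΛ
  have hg : sliceRight Λ (Coalgebra.comul (R := k) t) = g := by
    have hgt : sliceRight Λ (Coalgebra.comul t) = Λ t • g := hgΛ t
    rwa [← counit_sliceLeft_comul, hΛ, Bialgebra.counit_one, one_smul] at hgt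
  refine TensorProduct.ext_sliceRight fun μ => ?_
  obtain ⟨y, rfl⟩ := ht.surjective_mulLeft_antipode hΛ μ
  rw [ht.sliceRight_mulLeft, hg, sliceRight_map_id, sliceRight_comm,
    ht.sliceLeft_mulLeft_antipode hΛ]
  rfl

/-- `H` finite-dimensional Hopf algebra over `k` with bijective antipode
`S`, `t ≠ 0` a left integral, `Λ : H → k` with `Λ(t₁)·t₂ = 1`, and `g` grouplike with
`x₁·Λ(x₂) = Λ(x)·g` for all `x`.  Then `t₁ ⊗ t₂ = S²(t₂)·g ⊗ t₁` in `H ⊗ H`. -/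
theorem statement2 [FiniteDimensional k H]
    (hS : Function.Bijective ⇑(HopfAlgebra.antipode (R := k) (A := H)))
    (t : H) (ht0 : t ≠ 0)
    (htl : ∀ h : H, h * t = Coalgebra.counit (R := k) h • t)
    (Λ : H →ₗ[k] k) (hΛ : swl Λ t = 1)
    (g : H) (hg : Coalgebra.comul (R := k) g = g ⊗ₜ[k] g)
    (hgε : Coalgebra.counit (R := k) g = 1)
    (hgΛ : ∀ x : H, swr Λ x = Λ x • g) :
    Coalgebra.comul (R := k) t =
      (TensorProduct.map
        ((LinearMap.mulRight k g) ∘ₗ (HopfAlgebra.antipode (R := k)) ∘ₗ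
          (HopfAlgebra.antipode (R := k)))
        LinearMap.id)
      ((TensorProduct.comm k H H) (Coalgebra.comul (R := k) t)) :=
  statement2_general t htl Λ hΛ g hgΛ
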